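/- arXiv:2502.10628 — 4 statements merged into one kernel-verified Lean document; each statement's English description precedes it below -/
import Mathlib

section
/- For a zero-mean Gaussian random variable X with variance σ² and any reconstruction X̂ jointly distributed with X such that I(X;X̂) ≤ R and X̂ has the same distribution as X (zero perception loss), the minimum mean squared error E[(X−X̂)²] equals 2σ²(1−√(1−2^{−2R})). -/
open Real

/-- For a zero-mean Gaussian `X` with variance `σ2` and a jointly Gaussian reconstruction
`X̂ = ν X + Z` (`Z ~ N(0, α2)` independent of `X`, `ν ≥ 0`) subject to the rate constraint
`I(X;X̂) = ½ log₂(Var(X̂)/α2) ≤ R` and the zero-perception constraint `Var(X̂) = σ2`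
(so that `X̂ ~ N(0,σ2) = law of X`), the minimum MSE `E[(X−X̂)²] = (1−ν)²σ2 + α2`
equals `2σ2(1 − √(1 − 2^{−2R}))`. -/
theorem stmt0 (σ2 R : ℝ) (hσ : 0 < σ2) (hR : 0 ≤ R) :
    IsLeast {d : ℝ | ∃ ν α2 : ℝ, 0 ≤ ν ∧ 0 < α2 ∧
        ν ^ 2 * σ2 + α2 = σ2 ∧
        (1 / 2) * Real.logb 2 ((ν ^ 2 * σ2 + α2) / α2) ≤ R ∧
        d = (1 - ν) ^ 2 * σ2 + α2}
      (2 * σ2 * (1 - Real.sqrt (1 - (2 : ℝ) ^ (-(2 * R))))) := by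
  set t : ℝ := (2 : ℝ) ^ (-(2 * R)) with ht
  have htpos : 0 < t := Real.rpow_pos_of_pos (by norm_num) _
  have htle : t ≤ 1 := Real.rpow_le_one_of_one_le_of_nonpos (by norm_num) (by linarith)
  set s : ℝ := Real.sqrt (1 - t) with hs
  have hs0 : 0 ≤ s := Real.sqrt_nonneg _
  have hs2 : s ^ 2 = 1 - t := Real.sq_sqrt (by linarith)
  constructor
  · refine ⟨s, σ2 * t, hs0, by positivity, ?_, ?_, ?_⟩
    · nlinarith
    · have h1 : s ^ 2 * σ2 + σ2 * t = σ2 := by nlinarith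
      rw [h1]
      have hmul : t * (2 : ℝ) ^ (2 * R) = 1 := by
        rw [ht, ← Real.rpow_add (by norm_num)]; norm_num
      have h2 : σ2 / (σ2 * t) = (2 : ℝ) ^ (2 * R) := by
        field_simp
        nlinarith [hmul]
      rw [h2, Real.logb_rpow (by norm_num) (by norm_num)]
      linarith
    · nlinarith
  · rintro d ⟨ν, α2, hν, hα, hc, hrate, hd⟩
    rw [hc] at hrate
    have hq : 0 < σ2 / α2 := by positivity
    have h1 : Real.logb 2 (σ2 / α2) ≤ 2 * R := by linarith
    have h2 : σ2 / α2 ≤ (2 : ℝ) ^ (2 * R) := by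
      have := (Real.logb_le_iff_le_rpow (by norm_num : (1:ℝ) < 2) hq).mp h1
      exact this
    have h3 : σ2 * t ≤ α2 := by
      have h4 : σ2 ≤ (2 : ℝ) ^ (2 * R) * α2 := by
        rw [div_le_iff₀ hα] at h2; linarith
      have h5 : t * σ2 ≤ t * ((2 : ℝ) ^ (2 * R) * α2) :=
        mul_le_mul_of_nonneg_left h4 htpos.le
      have h6 : t * (2 : ℝ) ^ (2 * R) = 1 := by
        rw [ht, ← Real.rpow_add (by norm_num)]; simp
      nlinarith
    have hν2 : ν ^ 2 ≤ s ^ 2 := by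
      rw [hs2]
      have : ν ^ 2 * σ2 ≤ (1 - t) * σ2 := by nlinarith
      exact le_of_mul_le_mul_right (by linarith) hσ
    have hνs : ν ≤ s := by nlinarith
    nlinarith
end

section
/- Asymptotic solution of the FMD second-step program: as ε → 0⁺, with ν = √(2ε ln 2), the minimizer of 2σ²(1 − ρνω₁ − ω₂) subject to ω₂² ≤ (1−ω₁²)(1−2^{−2R₂}) satisfies ω₁ = ρ√(2ε ln 2)/√(1−2^{−2R₂}+ρ²·2ε ln 2), ω₂ = (1−2^{−2R₂})/√(1−2^{−2R₂}+ρ²·2ε ln 2), and the minimum value equals 2σ²(1 − √(1−2^{−2R₂}+ρ²·2ε ln 2)). -/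
open Real

set_option maxHeartbeats 1000000 in
/-- Solution of the FMD second-step program: with `b := 1−2^{−2R₂}`, `ν := √(2ε ln 2)`,
`a := ρν`, minimizing `2σ2(1 − aω₁ − ω₂)` over the region
`{ω₁² ≤ 1, ω₂ ≥ 0, ω₂² ≤ (1−ω₁²)b}` is achieved at
`ω₁ = ρ√(2ε ln 2)/√(b + ρ²·2ε ln 2)`, `ω₂ = b/√(b + ρ²·2ε ln 2)`, with minimum value
`2σ2(1 − √(b + ρ²·2ε ln 2))`. -/
theorem stmt12 (σ2 ρ R₂ ε : ℝ) (hσ : 0 < σ2) (hρ0 : 0 ≤ ρ) (hρ1 : ρ ≤ 1)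
    (hR : 0 < R₂) (hε : 0 < ε)
    (hsmall : 1 - (2 : ℝ) ^ (-(2 * R₂)) + ρ ^ 2 * (2 * ε * Real.log 2) ≤ 1) :
    let b := 1 - (2 : ℝ) ^ (-(2 * R₂))
    let a := ρ * Real.sqrt (2 * ε * Real.log 2)
    let s := Real.sqrt (b + ρ ^ 2 * (2 * ε * Real.log 2))
    let ω₁ := a / s
    let ω₂ := b / s
    (ω₁ ^ 2 ≤ 1 ∧ 0 ≤ ω₂ ∧ ω₂ ^ 2 ≤ (1 - ω₁ ^ 2) * b) ∧
    2 * σ2 * (1 - a * ω₁ - ω₂) = 2 * σ2 * (1 - s) ∧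
    IsLeast {y : ℝ | ∃ w₁ w₂ : ℝ, w₁ ^ 2 ≤ 1 ∧ 0 ≤ w₂ ∧ w₂ ^ 2 ≤ (1 - w₁ ^ 2) * b ∧
        y = 2 * σ2 * (1 - a * w₁ - w₂)} (2 * σ2 * (1 - s)) := by
  intro b a s ω₁ ω₂
  have hlog : 0 < Real.log 2 := Real.log_pos (by norm_num)
  have hc : 0 < 2 * ε * Real.log 2 := by positivity
  have hb : 0 < b := by
    have h1 : (2:ℝ) ^ (-(2*R₂)) < 1 :=
      Real.rpow_lt_one_of_one_lt_of_neg (by norm_num) (by linarith)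
    simp only [b]; linarith
  have ha : 0 ≤ a := by
    simp only [a]; positivity
  have ha2 : a ^ 2 = ρ ^ 2 * (2 * ε * Real.log 2) := by
    simp only [a, mul_pow, Real.sq_sqrt hc.le]
  have hbc : 0 < b + ρ ^ 2 * (2 * ε * Real.log 2) := by
    have := mul_nonneg (sq_nonneg ρ) hc.le; linarith
  have hs2 : s ^ 2 = b + ρ ^ 2 * (2 * ε * Real.log 2) := Real.sq_sqrt hbc.le
  have hspos : 0 < s := Real.sqrt_pos.mpr hbc
  have has : a ^ 2 + b = s ^ 2 := by rw [hs2, ha2]; ring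
  have hcon1 : ω₁ ^ 2 ≤ 1 := by
    simp only [ω₁, div_pow]
    rw [div_le_one (by positivity)]
    nlinarith
  have hcon2 : 0 ≤ ω₂ := by
    simp only [ω₂]; positivity
  have hcon3 : ω₂ ^ 2 ≤ (1 - ω₁ ^ 2) * b := by
    simp only [ω₂, ω₁, div_pow]
    have hs2ne : (s:ℝ) ^ 2 ≠ 0 := by positivity
    field_simp
    have hba : s ^ 2 - a ^ 2 = b := by linarith
    rw [hba]
  have hval : 2 * σ2 * (1 - a * ω₁ - ω₂) = 2 * σ2 * (1 - s) := by
    have : a * ω₁ + ω₂ = s := by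
      simp only [ω₁, ω₂]
      field_simp
      nlinarith
    rw [show (1 : ℝ) - a * ω₁ - ω₂ = 1 - s by linarith]
  refine ⟨⟨hcon1, hcon2, hcon3⟩, hval, ⟨⟨ω₁, ω₂, hcon1, hcon2, hcon3, hval.symm⟩, ?_⟩⟩
  rintro y ⟨w₁, w₂, h1, h2, h3, rfl⟩
  have key : a * w₁ + w₂ ≤ s := by
    rcases le_or_gt (a * w₁ + w₂) 0 with h | h
    · linarith
    · have hsq : (a * w₁ + w₂) ^ 2 ≤ s ^ 2 := by
        rw [← has]
        nlinarith [sq_nonneg (a * w₂ - b * w₁), mul_nonneg ha h2, hb.le]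
      nlinarith
  have h4 : (1:ℝ) - s ≤ 1 - a * w₁ - w₂ := by linarith
  exact mul_le_mul_of_nonneg_left h4 (by linarith)
end

section
/- Linear system for zero-perception SA at the fourth step: for 0 < ρ < 1, the system δ₁ + ρδ₂ + ρ²δ₃ + ρ³δ₄ = 0, ρδ₁ + δ₂ + ρ³δ₃ + ρ⁴δ₄ = ρ²(1−ρ²), ρ²δ₁ + ρ³δ₂ + δ₃ + ρ⁵δ₄ = ρ(1−ρ⁴), with constraint δ₄ ≤ 1, has the optimizing solution δ₁ = −3ρ³, δ₂ = ρ², δ₃ = ρ, δ₄ = 1 for maximizing ρ³δ₁ + ρ⁴δ₂ + ρ⁵δ₃ + δ₄, with maximum value 1 − ρ⁶. -/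
/-- Linear system for zero-perception SA at the fourth step: for `0 < ρ < 1`, over solutions of
`δ₁ + ρδ₂ + ρ²δ₃ + ρ³δ₄ = 0`, `ρδ₁ + δ₂ + ρ³δ₃ + ρ⁴δ₄ = ρ²(1−ρ²)`,
`ρ²δ₁ + ρ³δ₂ + δ₃ + ρ⁵δ₄ = ρ(1−ρ⁴)` with `δ₄ ≤ 1`, the functional
`ρ³δ₁ + ρ⁴δ₂ + ρ⁵δ₃ + δ₄` is maximized at `(δ₁,δ₂,δ₃,δ₄) = (−3ρ³, ρ², ρ, 1)`
with maximum value `1 − ρ⁶`. -/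
theorem stmt15 (ρ : ℝ) (hρ0 : 0 < ρ) (hρ1 : ρ < 1) :
    IsGreatest {y : ℝ | ∃ δ₁ δ₂ δ₃ δ₄ : ℝ,
        δ₁ + ρ * δ₂ + ρ ^ 2 * δ₃ + ρ ^ 3 * δ₄ = 0 ∧
        ρ * δ₁ + δ₂ + ρ ^ 3 * δ₃ + ρ ^ 4 * δ₄ = ρ ^ 2 * (1 - ρ ^ 2) ∧
        ρ ^ 2 * δ₁ + ρ ^ 3 * δ₂ + δ₃ + ρ ^ 5 * δ₄ = ρ * (1 - ρ ^ 4) ∧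
        δ₄ ≤ 1 ∧
        y = ρ ^ 3 * δ₁ + ρ ^ 4 * δ₂ + ρ ^ 5 * δ₃ + δ₄} (1 - ρ ^ 6) ∧
    ((-3 * ρ ^ 3) + ρ * ρ ^ 2 + ρ ^ 2 * ρ + ρ ^ 3 * 1 = 0 ∧
     ρ * (-3 * ρ ^ 3) + ρ ^ 2 + ρ ^ 3 * ρ + ρ ^ 4 * 1 = ρ ^ 2 * (1 - ρ ^ 2) ∧
     ρ ^ 2 * (-3 * ρ ^ 3) + ρ ^ 3 * ρ ^ 2 + ρ + ρ ^ 5 * 1 = ρ * (1 - ρ ^ 4) ∧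
     ρ ^ 3 * (-3 * ρ ^ 3) + ρ ^ 4 * ρ ^ 2 + ρ ^ 5 * ρ + 1 = 1 - ρ ^ 6) := by
  have h6 : ρ ^ 6 < 1 := by
    have := pow_lt_one₀ (le_of_lt hρ0) hρ1 (n := 6) (by norm_num)
    exact this
  refine ⟨⟨⟨-3 * ρ ^ 3, ρ ^ 2, ρ, 1, by ring, by ring, by ring, le_refl 1, by ring⟩, ?_⟩,
    by ring, by ring, by ring, by ring⟩
  rintro y ⟨δ₁, δ₂, δ₃, δ₄, h1, h2, h3, h4, rfl⟩
  have key : ρ ^ 3 * δ₁ + ρ ^ 4 * δ₂ + ρ ^ 5 * δ₃ + δ₄ = (1 - ρ ^ 6) * δ₄ := by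
    linear_combination ρ ^ 3 * h1
  rw [key]
  nlinarith
end

section
/- Third-frame JD distortion at high first-frame rate and vanishing R₂: for 0 < ρ < 1, with the reconstruction X̂₃ = −(ρ²/√(1+ρ²))X̂₁ + ρX̂₂ + (1/√(1+ρ²))X₃ built from X̂₁ = X₁ and X̂₂ = ρX₁ + Z₂ where Z₂ ~ N(0,(1−ρ²)σ²) is independent of (X₁,N₁,N₂), the distortion satisfies E[(X₃−X̂₃)²] = 2σ²(1−ρ⁴)(1 − 1/√(1+ρ²)). -/
/-!
The `X₁` terms cancel, so with `t = √(1 + ρ²)` the error is `(1 - 1/t)(ρ N₁ + N₂) - ρ Z₂`, a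
combination of centred, pairwise independent variables of common variance `w = (1 - ρ²) σ2`.
Its second moment is its variance `((1 - 1/t)² (1 + ρ²) + ρ²) w = ((t - 1)² + ρ²) w`, and using
`t² = 1 + ρ²` this is `2 t (t - 1) w = 2 (1 + ρ²) (1 - 1/t) w`.
-/

open MeasureTheory ProbabilityTheory

namespace ProbabilityTheory

variable {Ω : Type*} [MeasurableSpace Ω] {μ : Measure Ω} {X Y Z : Ω → ℝ}

lemma HasLaw.memLp_two_of_gaussianReal [IsFiniteMeasure μ] {m : ℝ} {v : NNReal}
    (hX : HasLaw X (gaussianReal m v) μ) : MemLp X 2 μ := by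
  have hid : MemLp id 2 (μ.map X) := hX.map_eq ▸ memLp_id_gaussianReal 2
  exact (memLp_map_measure_iff aestronglyMeasurable_id hX.aemeasurable).1 hid

lemma HasLaw.integral_eq_of_gaussianReal {m : ℝ} {v : NNReal}
    (hX : HasLaw X (gaussianReal m v) μ) : μ[X] = m := by
  rw [hX.integral_eq, integral_id_gaussianReal]

lemma HasLaw.variance_eq_of_gaussianReal {m : ℝ} {v : NNReal}
    (hX : HasLaw X (gaussianReal m v) μ) : Var[X; μ] = v := by
  rw [hX.variance_eq, variance_id_gaussianReal]

lemma IndepFun.variance_add_add [IsFiniteMeasure μ]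
    (hX : MemLp X 2 μ) (hY : MemLp Y 2 μ) (hZ : MemLp Z 2 μ)
    (hXY : X ⟂ᵢ[μ] Y) (hXZ : X ⟂ᵢ[μ] Z) (hYZ : Y ⟂ᵢ[μ] Z) :
    Var[X + Y + Z; μ] = Var[X; μ] + Var[Y; μ] + Var[Z; μ] := by
  rw [ProbabilityTheory.variance_add (hX.add hY) hZ, ProbabilityTheory.variance_add hX hY,
    covariance_add_left hX hY hZ, hXY.covariance_eq_zero hX hY, hXZ.covariance_eq_zero hX hZ,
    hYZ.covariance_eq_zero hY hZ]
  ring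

lemma integral_sq_add_add_of_indepFun [IsFiniteMeasure μ]
    (hX : MemLp X 2 μ) (hY : MemLp Y 2 μ) (hZ : MemLp Z 2 μ)
    (hX0 : μ[X] = 0) (hY0 : μ[Y] = 0) (hZ0 : μ[Z] = 0)
    (hXY : X ⟂ᵢ[μ] Y) (hXZ : X ⟂ᵢ[μ] Z) (hYZ : Y ⟂ᵢ[μ] Z) (a b c : ℝ) :
    ∫ ω, (a * X ω + b * Y ω + c * Z ω) ^ 2 ∂μ
      = a ^ 2 * Var[X; μ] + b ^ 2 * Var[Y; μ] + c ^ 2 * Var[Z; μ] := by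
  have haX := hX.const_smul a
  have hbY := hY.const_smul b
  have hcZ := hZ.const_smul c
  have hmean : μ[a • X + b • Y + c • Z] = 0 := by
    rw [integral_add' ((haX.integrable one_le_two).add (hbY.integrable one_le_two))
        (hcZ.integrable one_le_two),
      integral_add' (haX.integrable one_le_two) (hbY.integrable one_le_two)]
    simp only [Pi.smul_apply, integral_smul, hX0, hY0, hZ0, smul_zero, add_zero]
  have hmeas : AEMeasurable (a • X + b • Y + c • Z) μ :=
    ((haX.add hbY).add hcZ).aestronglyMeasurable.aemeasurable
  rw [← variance_smul, ← variance_smul, ← variance_smul,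
    ← IndepFun.variance_add_add haX hbY hcZ
      (hXY.comp (measurable_const_mul a) (measurable_const_mul b))
      (hXZ.comp (measurable_const_mul a) (measurable_const_mul c))
      (hYZ.comp (measurable_const_mul b) (measurable_const_mul c)),
    variance_of_integral_eq_zero hmeas hmean]
  rfl

end ProbabilityTheory

lemma reconstruction_error_eq (ρ t x n₁ n₂ z : ℝ) :
    (ρ ^ 2 * x + ρ * n₁ + n₂)
        - (-(ρ ^ 2 / t) * x + ρ * (ρ * x + z) + (1 / t) * (ρ ^ 2 * x + ρ * n₁ + n₂))
      = ((1 - 1 / t) * ρ) * n₁ + (1 - 1 / t) * n₂ + (-ρ) * z := by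
  ring

theorem stmt18_general {Ω : Type*} [MeasurableSpace Ω] (μ : Measure Ω) [IsProbabilityMeasure μ]
    (ρ σ2 : ℝ) (hρ0 : 0 < ρ) (hρ1 : ρ < 1) (hσ : 0 < σ2)
    (X₁ N₁ N₂ Z₂ : Ω → ℝ)
    (hindep : iIndepFun ![X₁, N₁, N₂, Z₂] μ)
    (hN₁ : μ.map N₁ = gaussianReal 0 ((1 - ρ ^ 2) * σ2).toNNReal)
    (hN₂ : μ.map N₂ = gaussianReal 0 ((1 - ρ ^ 2) * σ2).toNNReal)
    (hZ₂ : μ.map Z₂ = gaussianReal 0 ((1 - ρ ^ 2) * σ2).toNNReal) :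
    ∫ ω, ((ρ ^ 2 * X₁ ω + ρ * N₁ ω + N₂ ω)
        - (-(ρ ^ 2 / Real.sqrt (1 + ρ ^ 2)) * X₁ ω
           + ρ * (ρ * X₁ ω + Z₂ ω)
           + (1 / Real.sqrt (1 + ρ ^ 2)) * (ρ ^ 2 * X₁ ω + ρ * N₁ ω + N₂ ω))) ^ 2 ∂μ
      = 2 * σ2 * (1 - ρ ^ 4) * (1 - 1 / Real.sqrt (1 + ρ ^ 2)) := by
  have hlaw {V : Ω → ℝ} (hV : μ.map V = gaussianReal 0 ((1 - ρ ^ 2) * σ2).toNNReal) :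
      HasLaw V (gaussianReal 0 ((1 - ρ ^ 2) * σ2).toNNReal) μ :=
    ⟨.of_map_ne_zero (hV ▸ IsProbabilityMeasure.ne_zero _), hV⟩
  have hN₁' := hlaw hN₁
  have hN₂' := hlaw hN₂
  have hZ₂' := hlaw hZ₂
  simp only [reconstruction_error_eq]
  rw [integral_sq_add_add_of_indepFun hN₁'.memLp_two_of_gaussianReal
      hN₂'.memLp_two_of_gaussianReal hZ₂'.memLp_two_of_gaussianReal
      hN₁'.integral_eq_of_gaussianReal hN₂'.integral_eq_of_gaussianReal
      hZ₂'.integral_eq_of_gaussianReal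
      (hindep.indepFun (i := 1) (j := 2) (by decide))
      (hindep.indepFun (i := 1) (j := 3) (by decide))
      (hindep.indepFun (i := 2) (j := 3) (by decide)),
    hN₁'.variance_eq_of_gaussianReal, hN₂'.variance_eq_of_gaussianReal,
    hZ₂'.variance_eq_of_gaussianReal, Real.coe_toNNReal _ (mul_nonneg (by nlinarith) hσ.le)]
  have hsqrt : Real.sqrt (1 + ρ ^ 2) ^ 2 = 1 + ρ ^ 2 := Real.sq_sqrt (by positivity)
  have hsqrt_pos : 0 < Real.sqrt (1 + ρ ^ 2) := Real.sqrt_pos.2 (by positivity)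
  field_simp
  linear_combination (ρ ^ 2 - 1) * hsqrt

/-- Third-frame JD distortion at high first-frame rate and vanishing `R₂`: in the Gauss-Markov
model `X₃ = ρ²X₁ + ρN₁ + N₂` with `X₁ ~ N(0,σ2)`, `N₁,N₂,Z₂ ~ N(0,(1−ρ²)σ2)` all independent,
with `X̂₁ = X₁`, `X̂₂ = ρX₁ + Z₂`, and
`X̂₃ = −(ρ²/√(1+ρ²))X̂₁ + ρX̂₂ + (1/√(1+ρ²))X₃`, the distortion satisfies
`E[(X₃−X̂₃)²] = 2σ2(1−ρ⁴)(1 − 1/√(1+ρ²))`. -/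
theorem stmt18 {Ω : Type*} [MeasurableSpace Ω] (μ : Measure Ω) [IsProbabilityMeasure μ]
    (ρ σ2 : ℝ) (hρ0 : 0 < ρ) (hρ1 : ρ < 1) (hσ : 0 < σ2)
    (X₁ N₁ N₂ Z₂ : Ω → ℝ)
    (hindep : iIndepFun ![X₁, N₁, N₂, Z₂] μ)
    (hX₁ : μ.map X₁ = gaussianReal 0 σ2.toNNReal)
    (hN₁ : μ.map N₁ = gaussianReal 0 ((1 - ρ ^ 2) * σ2).toNNReal)
    (hN₂ : μ.map N₂ = gaussianReal 0 ((1 - ρ ^ 2) * σ2).toNNReal)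
    (hZ₂ : μ.map Z₂ = gaussianReal 0 ((1 - ρ ^ 2) * σ2).toNNReal) :
    ∫ ω, ((ρ ^ 2 * X₁ ω + ρ * N₁ ω + N₂ ω)
        - (-(ρ ^ 2 / Real.sqrt (1 + ρ ^ 2)) * X₁ ω
           + ρ * (ρ * X₁ ω + Z₂ ω)
           + (1 / Real.sqrt (1 + ρ ^ 2)) * (ρ ^ 2 * X₁ ω + ρ * N₁ ω + N₂ ω))) ^ 2 ∂μ
      = 2 * σ2 * (1 - ρ ^ 4) * (1 - 1 / Real.sqrt (1 + ρ ^ 2)) :=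
  stmt18_general μ ρ σ2 hρ0 hρ1 hσ X₁ N₁ N₂ Z₂ hindep hN₁ hN₂ hZ₂
end
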